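/- arXiv:2202.12771 — 3 statements merged into one kernel-verified Lean document; each statement's English description precedes it below -/
import Mathlib

section
/- Let n ≥ 2 and let B be the open unit ball of ℝⁿ. For all a, x, y ∈ B one has (1 − ρ(x,y))/(1 + ρ(x,y)) ≤ [x,a]/[y,a] ≤ (1 + ρ(x,y))/(1 − ρ(x,y)). -/
open MeasureTheory Filter Set
open scoped ENNReal NNReal Topology

noncomputable section

/-- Euclidean space ℝⁿ. -/
abbrev E (n : ℕ) := EuclideanSpace ℝ (Fin n)

/-- The open unit ball of ℝⁿ. -/
def Bset (n : ℕ) : Set (E n) := Metric.ball 0 1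

/-- The bracket `[x,y] = √(1 − 2 x·y + |x|²|y|²)`. -/
def br {n : ℕ} (x y : E n) : ℝ := Real.sqrt (1 - 2 * (inner ℝ x y : ℝ) + ‖x‖ ^ 2 * ‖y‖ ^ 2)

/-- The pseudohyperbolic distance `ρ(x,y) = |x − y|/[x,y]`. -/
def pd {n : ℕ} (x y : E n) : ℝ := ‖x - y‖ / br x y

/-- The pseudohyperbolic ball `E_δ(x) = {y ∈ B : ρ(x,y) < δ}`. -/
def Eball {n : ℕ} (δ : ℝ) (x : E n) : Set (E n) := {y | y ∈ Bset n ∧ pd x y < δ}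

/-- Lebesgue volume measure on ℝⁿ normalized so that `ν(B) = 1`. -/
def nu (n : ℕ) : Measure (E n) := (volume (Bset n))⁻¹ • volume

/-!
Writing `[x,a] = ‖|a| x − a/|a|‖` shows that `[·,a]` is `|a|`-Lipschitz, so `[x,a] ≤ [y,a] + |x − y|`.
Applied with `a = y` it also gives `[x,y] − |x − y| ≤ [y,y] = 1 − |y|² ≤ 2 (1 − |y| |a|) ≤ 2 [y,a]`.
With `K = [x,y]` and `d = |x − y|` the two estimates combine to `[x,a] (K − d) ≤ [y,a] (K + d)`,
which is the upper bound because `(1 + ρ)/(1 − ρ) = (K + d)/(K − d)`; the lower bound is the upper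
bound with `x` and `y` exchanged.
-/

section Bracket

variable {n : ℕ}

lemma one_sub_mul_sq_le_br_radicand (x y : E n) :
    (1 - ‖x‖ * ‖y‖) ^ 2 ≤ 1 - 2 * inner ℝ x y + ‖x‖ ^ 2 * ‖y‖ ^ 2 := by
  nlinarith [real_inner_le_norm x y]

lemma br_sq (x y : E n) : br x y ^ 2 = 1 - 2 * inner ℝ x y + ‖x‖ ^ 2 * ‖y‖ ^ 2 :=
  Real.sq_sqrt ((sq_nonneg _).trans (one_sub_mul_sq_le_br_radicand x y))

lemma br_sq_eq_norm_sub_sq_add (x y : E n) :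
    br x y ^ 2 = ‖x - y‖ ^ 2 + (1 - ‖x‖ ^ 2) * (1 - ‖y‖ ^ 2) := by
  rw [br_sq, norm_sub_sq_real]; ring

lemma one_sub_mul_le_br (x y : E n) : 1 - ‖x‖ * ‖y‖ ≤ br x y :=
  (le_abs_self _).trans (Real.abs_le_sqrt (one_sub_mul_sq_le_br_radicand x y))

lemma br_comm (x y : E n) : br x y = br y x := by
  simp only [br, real_inner_comm, mul_comm]

lemma br_self (y : E n) (hy : ‖y‖ ≤ 1) : br y y = 1 - ‖y‖ ^ 2 := by
  rw [br, real_inner_self_eq_norm_sq, ← Real.sqrt_sq (by nlinarith [norm_nonneg y] : 0 ≤ 1 - ‖y‖ ^ 2)]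
  congr 1; ring

lemma br_eq_norm_smul_sub (x a : E n) (ha : a ≠ 0) : br x a = ‖‖a‖ • x - ‖a‖⁻¹ • a‖ := by
  have hpos : 0 < ‖a‖ := norm_pos_iff.2 ha
  rw [br, ← Real.sqrt_sq (norm_nonneg (‖a‖ • x - ‖a‖⁻¹ • a)), norm_sub_sq_real,
    real_inner_smul_left, real_inner_smul_right, norm_smul, norm_smul, Real.norm_of_nonneg hpos.le,
    Real.norm_of_nonneg (inv_nonneg.2 hpos.le)]
  congr 1
  field_simp
  ring

lemma br_le_br_add (x y a : E n) : br x a ≤ br y a + ‖a‖ * ‖x - y‖ := by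
  rcases eq_or_ne a 0 with rfl | ha
  · simp [br]
  rw [br_eq_norm_smul_sub x a ha, br_eq_norm_smul_sub y a ha]
  calc ‖‖a‖ • x - ‖a‖⁻¹ • a‖ ≤ ‖‖a‖ • x - ‖a‖ • y‖ + ‖‖a‖ • y - ‖a‖⁻¹ • a‖ :=
        norm_sub_le_norm_sub_add_norm_sub _ _ _
    _ = ‖‖a‖ • y - ‖a‖⁻¹ • a‖ + ‖a‖ * ‖x - y‖ := by
        rw [add_comm, ← smul_sub, norm_smul, norm_norm]

end Bracket

section Ball

variable {n : ℕ} {a x y : E n}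

lemma br_pos (hx : ‖x‖ < 1) (hy : ‖y‖ < 1) : 0 < br x y := by
  have : ‖x‖ * ‖y‖ < 1 := by nlinarith [norm_nonneg x, norm_nonneg y]
  linarith [one_sub_mul_le_br x y]

lemma norm_sub_lt_br (hx : ‖x‖ < 1) (hy : ‖y‖ < 1) : ‖x - y‖ < br x y := by
  have hxy : 0 < (1 - ‖x‖ ^ 2) * (1 - ‖y‖ ^ 2) := by
    apply mul_pos <;> nlinarith [norm_nonneg x, norm_nonneg y]
  refine lt_of_pow_lt_pow_left₀ 2 (br_pos hx hy).le ?_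
  linarith [br_sq_eq_norm_sub_sq_add x y]

lemma br_sub_norm_sub_le (hy : ‖y‖ ≤ 1) (ha : ‖a‖ ≤ 1) : br x y - ‖x - y‖ ≤ 2 * br y a := by
  have h₁ : br x y ≤ br y y + ‖y‖ * ‖x - y‖ := br_le_br_add x y y
  have h₂ : ‖y‖ * ‖x - y‖ ≤ ‖x - y‖ := mul_le_of_le_one_left (norm_nonneg _) hy
  have h₃ : 1 - ‖y‖ ^ 2 ≤ 2 * (1 - ‖y‖ * ‖a‖) := by nlinarith [norm_nonneg y, norm_nonneg a]
  linarith [br_self y hy, one_sub_mul_le_br y a]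

lemma pd_comm (x y : E n) : pd x y = pd y x := by
  rw [pd, pd, norm_sub_rev, br_comm]

lemma br_div_br_le (ha : ‖a‖ < 1) (hx : ‖x‖ < 1) (hy : ‖y‖ < 1) :
    br x a / br y a ≤ (1 + pd x y) / (1 - pd x y) := by
  have hK := br_pos hx hy
  have hdK := norm_sub_lt_br hx hy
  have hya := br_pos hy ha
  have hρ : (1 + pd x y) / (1 - pd x y) = (br x y + ‖x - y‖) / (br x y - ‖x - y‖) := by
    rw [pd]
    field_simp
  rw [hρ, div_le_div_iff₀ hya (sub_pos.2 hdK)]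
  calc br x a * (br x y - ‖x - y‖)
      ≤ (br y a + ‖x - y‖) * (br x y - ‖x - y‖) := by
        gcongr
        linarith [br_le_br_add x y a, mul_le_of_le_one_left (norm_nonneg (x - y)) ha.le]
    _ ≤ br y a * (br x y - ‖x - y‖) + ‖x - y‖ * (2 * br y a) := by
        rw [add_mul]
        gcongr
        exact br_sub_norm_sub_le hy.le ha.le
    _ = (br x y + ‖x - y‖) * br y a := by ring

end Ball

theorem stmt0_general (n : ℕ) (a x y : E n)
    (ha : a ∈ Bset n) (hx : x ∈ Bset n) (hy : y ∈ Bset n) :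
    (1 - pd x y) / (1 + pd x y) ≤ br x a / br y a ∧
      br x a / br y a ≤ (1 + pd x y) / (1 - pd x y) := by
  rw [Bset, mem_ball_zero_iff] at ha hx hy
  refine ⟨?_, br_div_br_le ha hx hy⟩
  have hswap : br y a / br x a ≤ (1 + pd x y) / (1 - pd x y) := by
    rw [pd_comm]
    exact br_div_br_le ha hy hx
  calc (1 - pd x y) / (1 + pd x y) = ((1 + pd x y) / (1 - pd x y))⁻¹ := (inv_div _ _).symm
    _ ≤ (br y a / br x a)⁻¹ := inv_anti₀ (div_pos (br_pos hy ha) (br_pos hx ha)) hswap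
    _ = br x a / br y a := inv_div _ _

/-- For all `a, x, y ∈ B`,
`(1 − ρ(x,y))/(1 + ρ(x,y)) ≤ [x,a]/[y,a] ≤ (1 + ρ(x,y))/(1 − ρ(x,y))`. -/
theorem stmt0 (n : ℕ) (hn : 2 ≤ n) (a x y : E n)
    (ha : a ∈ Bset n) (hx : x ∈ Bset n) (hy : y ∈ Bset n) :
    (1 - pd x y) / (1 + pd x y) ≤ br x a / br y a ∧
      br x a / br y a ≤ (1 + pd x y) / (1 - pd x y) :=
  stmt0_general n a x y ha hx hy
end
end

section
/- Let n ≥ 2, B the open unit ball of ℝⁿ, and 0 < δ < 1. There exists a constant C ≥ 1 (depending only on δ) such that for all a, x, y ∈ B with ρ(x,y) < δ one has C⁻¹[y,a] ≤ [x,a] ≤ C[y,a]. -/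
/-!
For `a ≠ 0` one has `[x,a] = ‖ |a| x - a/|a| ‖`, so `x ↦ [x,a]` is `|a|`-Lipschitz.
Taking `a = y`, where `[y,y] = 1 - |y|²`, the condition `|x - y| < δ [x,y]` gives
`|x - y| ≤ δ/(1-δ) (1 - |y|²)`, and Cauchy–Schwarz gives `1 - |y|² ≤ 2 [y,a]`.
Hence `[x,a] ≤ [y,a] + |x - y| ≤ (1+δ)/(1-δ) [y,a]`, and by symmetry the lower bound.
-/

open MeasureTheory Filter Set
open scoped ENNReal NNReal Topology

noncomputable section

namespace Bracket

variable {n : ℕ}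

lemma br_symm (x y : E n) : br x y = br y x := by
  rw [br, br, real_inner_comm, mul_comm (‖x‖ ^ 2)]

lemma pd_symm (x y : E n) : pd x y = pd y x := by
  rw [pd, pd, br_symm, norm_sub_rev]

lemma pd_nonneg (x y : E n) : 0 ≤ pd x y :=
  div_nonneg (norm_nonneg _) (Real.sqrt_nonneg _)

lemma br_zero_right (x : E n) : br x 0 = 1 := by
  simp [br]

lemma br_self {x : E n} (hx : ‖x‖ ≤ 1) : br x x = 1 - ‖x‖ ^ 2 := by
  have hx2 : ‖x‖ ^ 2 ≤ 1 := pow_le_one₀ (norm_nonneg x) hx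
  rw [br, real_inner_self_eq_norm_sq,
    show 1 - 2 * ‖x‖ ^ 2 + ‖x‖ ^ 2 * ‖x‖ ^ 2 = (1 - ‖x‖ ^ 2) ^ 2 by ring,
    Real.sqrt_sq (by linarith)]

lemma br_eq_norm_smul_sub (x : E n) {a : E n} (ha : a ≠ 0) :
    br x a = ‖‖a‖ • x - ‖a‖⁻¹ • a‖ := by
  have ha' : ‖a‖ ≠ 0 := norm_ne_zero_iff.mpr ha
  rw [br, ← Real.sqrt_sq (norm_nonneg (‖a‖ • x - ‖a‖⁻¹ • a)), norm_sub_sq_real,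
    real_inner_smul_left, real_inner_smul_right, norm_smul, norm_smul, Real.norm_eq_abs,
    Real.norm_eq_abs, abs_norm, abs_inv, abs_norm]
  field_simp
  congr 1
  ring

lemma br_le_br_add_mul_norm_sub (x y a : E n) : br x a ≤ br y a + ‖a‖ * ‖x - y‖ := by
  rcases eq_or_ne a 0 with rfl | ha
  · simp [br_zero_right]
  have h := norm_sub_norm_le (‖a‖ • x - ‖a‖⁻¹ • a) (‖a‖ • y - ‖a‖⁻¹ • a)
  rw [sub_sub_sub_cancel_right, ← smul_sub, norm_smul, norm_norm] at h
  rw [br_eq_norm_smul_sub x ha, br_eq_norm_smul_sub y ha]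
  linarith

lemma one_sub_norm_mul_norm_le_br (x y : E n) : 1 - ‖x‖ * ‖y‖ ≤ br x y := by
  apply Real.le_sqrt_of_sq_le
  nlinarith [real_inner_le_norm x y]

lemma br_pos {x y : E n} (hx : ‖x‖ < 1) (hy : ‖y‖ ≤ 1) : 0 < br x y := by
  have : ‖x‖ * ‖y‖ < 1 := by nlinarith [norm_nonneg x, norm_nonneg y]
  linarith [one_sub_norm_mul_norm_le_br x y]

lemma one_sub_norm_sq_le_two_mul_br {y a : E n} (hy : ‖y‖ ≤ 1) (ha : ‖a‖ ≤ 1) :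
    1 - ‖y‖ ^ 2 ≤ 2 * br y a := by
  have := one_sub_norm_mul_norm_le_br y a
  nlinarith [norm_nonneg y, norm_nonneg a]

lemma norm_sub_le_of_pd_lt {x y : E n} {δ : ℝ} (hx : ‖x‖ < 1) (hy : ‖y‖ < 1) (hδ : δ < 1)
    (h : pd x y < δ) : ‖x - y‖ ≤ δ / (1 - δ) * (1 - ‖y‖ ^ 2) := by
  have hδ0 : 0 ≤ δ := (pd_nonneg x y).trans h.le
  have hlt : ‖x - y‖ < δ * br x y := by
    rw [pd, div_lt_iff₀ (br_pos hx hy.le)] at h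
    linarith
  have hbr : br x y ≤ 1 - ‖y‖ ^ 2 + ‖x - y‖ := by
    have := br_le_br_add_mul_norm_sub x y y
    rw [br_self hy.le] at this
    nlinarith [norm_nonneg (x - y)]
  rw [div_mul_eq_mul_div, le_div_iff₀ (by linarith)]
  nlinarith

lemma br_le_of_pd_lt {x y a : E n} {δ : ℝ} (hx : ‖x‖ < 1) (hy : ‖y‖ < 1) (ha : ‖a‖ ≤ 1)
    (hδ : δ < 1) (h : pd x y < δ) : br x a ≤ (1 + δ) / (1 - δ) * br y a := by
  have hδ0 : 0 ≤ δ := (pd_nonneg x y).trans h.le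
  have hxy := norm_sub_le_of_pd_lt hx hy hδ h
  have hya := one_sub_norm_sq_le_two_mul_br hy.le ha
  have hcoef : 0 ≤ δ / (1 - δ) := div_nonneg hδ0 (by linarith)
  calc br x a ≤ br y a + ‖a‖ * ‖x - y‖ := br_le_br_add_mul_norm_sub x y a
    _ ≤ br y a + ‖x - y‖ := by nlinarith [norm_nonneg (x - y)]
    _ ≤ br y a + δ / (1 - δ) * (2 * br y a) := by
      nlinarith [mul_le_mul_of_nonneg_left hya hcoef]
    _ = (1 + δ) / (1 - δ) * br y a := by
      field_simp [(by linarith : (1 - δ) ≠ 0)]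
      ring

end Bracket

theorem stmt2_general (n : ℕ) (δ : ℝ) (hδ0 : 0 < δ) (hδ1 : δ < 1) :
    ∃ C : ℝ, 1 ≤ C ∧ ∀ a x y : E n, a ∈ Bset n → x ∈ Bset n → y ∈ Bset n →
      pd x y < δ → C⁻¹ * br y a ≤ br x a ∧ br x a ≤ C * br y a := by
  have hC : 1 ≤ (1 + δ) / (1 - δ) := by
    rw [le_div_iff₀ (by linarith)]
    linarith
  refine ⟨(1 + δ) / (1 - δ), hC, fun a x y ha hx hy h => ⟨?_, ?_⟩⟩
  all_goals simp only [Bset, Metric.mem_ball, dist_zero_right] at ha hx hy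
  · rw [inv_mul_le_iff₀ (by linarith)]
    exact Bracket.br_le_of_pd_lt hy hx ha.le hδ1 (by rwa [Bracket.pd_symm])
  · exact Bracket.br_le_of_pd_lt hx hy ha.le hδ1 h

/-- For `0 < δ < 1` there is `C ≥ 1` (depending only on `δ`) such that for
all `a, x, y ∈ B` with `ρ(x,y) < δ`, `C⁻¹[y,a] ≤ [x,a] ≤ C[y,a]`. -/
theorem stmt2 (n : ℕ) (hn : 2 ≤ n) (δ : ℝ) (hδ0 : 0 < δ) (hδ1 : δ < 1) :
    ∃ C : ℝ, 1 ≤ C ∧ ∀ a x y : E n, a ∈ Bset n → x ∈ Bset n → y ∈ Bset n →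
      pd x y < δ → C⁻¹ * br y a ≤ br x a ∧ br x a ≤ C * br y a :=
  stmt2_general n δ hδ0 hδ1
end
end

section
/- Let n ≥ 2, B the open unit ball of ℝⁿ, α ∈ ℝ and 0 < δ < 1. There exists a constant C ≥ 1 (depending only on n, α, δ) such that for all x ∈ B: C⁻¹(1 − |x|²)^{α+n} ≤ ∫_{E_δ(x)} (1 − |y|²)^α dν(y) ≤ C(1 − |x|²)^{α+n}. -/
open MeasureTheory Filter Set
open scoped ENNReal NNReal Topology

noncomputable section

/-!
The bracket satisfies `[x,y]² = (1 - |x|²)(1 - |y|²) + |x - y|²`, so `ρ(x,y) < δ` means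
`|x - y|² < t (1 - |x|²)(1 - |y|²)` with `t = δ²/(1 - δ²)`. Since `1 - |y|²` moves by at most
`2|x - y|`, this forces `1 - |x|²` and `1 - |y|²` to be comparable on `E_δ(x)`, and then `E_δ(x)`
contains and is contained in Euclidean balls around `x` of radius comparable to `1 - |x|²`.
Hence the weight is comparable to `(1 - |x|²)^α` on `E_δ(x)`, and since a ball of radius `r` has
`ν`-measure `rⁿ`, the integral is comparable to `(1 - |x|²)^(α + n)`.
-/

open Metric

lemma rpow_le_rpow_abs_mul_rpow {a b K α : ℝ} (ha : 0 < a) (hb : 0 < b) (hK : 1 ≤ K)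
    (hba : b ≤ K * a) (hab : a ≤ K * b) : b ^ α ≤ K ^ |α| * a ^ α := by
  have hK0 : 0 < K := one_pos.trans_le hK
  rcases le_or_gt 0 α with hα | hα
  · calc b ^ α ≤ (K * a) ^ α := Real.rpow_le_rpow hb.le hba hα
      _ = K ^ |α| * a ^ α := by rw [abs_of_nonneg hα, Real.mul_rpow hK0.le ha.le]
  · calc b ^ α ≤ (a / K) ^ α :=
          Real.rpow_le_rpow_of_nonpos (by positivity) ((div_le_iff₀ hK0).mpr (by linarith)) hα.le
      _ = K ^ |α| * a ^ α := by
        rw [abs_of_neg hα, Real.div_rpow ha.le hK0.le, Real.rpow_neg hK0.le, div_eq_inv_mul]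

lemma le_two_add_four_mul_of_sq_sub_le {a b t : ℝ} (hb : 0 < b) (h : (a - b) ^ 2 ≤ 4 * t * a * b) :
    b ≤ (2 + 4 * t) * a := by
  by_contra! hlt
  nlinarith [mul_lt_mul_of_pos_left hlt hb, sq_nonneg a]

section NormedGroup

variable {F : Type*} [SeminormedAddCommGroup F] {x y : F} {t : ℝ}

lemma abs_sq_norm_sub_sq_norm_le (hx : ‖x‖ ≤ 1) (hy : ‖y‖ ≤ 1) :
    |‖x‖ ^ 2 - ‖y‖ ^ 2| ≤ 2 * ‖x - y‖ := by
  have hsum : ‖x‖ + ‖y‖ ≤ 2 := by linarith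
  calc |‖x‖ ^ 2 - ‖y‖ ^ 2| = |‖x‖ - ‖y‖| * (‖x‖ + ‖y‖) := by
        rw [sq_sub_sq, abs_mul, abs_of_nonneg (by positivity : 0 ≤ ‖x‖ + ‖y‖), mul_comm]
    _ ≤ ‖x - y‖ * 2 := mul_le_mul (abs_norm_sub_norm_le x y) hsum (by positivity) (norm_nonneg _)
    _ = 2 * ‖x - y‖ := mul_comm _ _

lemma one_sub_sq_norm_le_of_sq_norm_sub_le (hx : ‖x‖ ≤ 1) (hy : ‖y‖ < 1)
    (h : ‖x - y‖ ^ 2 ≤ t * ((1 - ‖x‖ ^ 2) * (1 - ‖y‖ ^ 2))) :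
    1 - ‖y‖ ^ 2 ≤ (2 + 4 * t) * (1 - ‖x‖ ^ 2) := by
  refine le_two_add_four_mul_of_sq_sub_le (by nlinarith [norm_nonneg y]) ?_
  have hdiff := abs_sq_norm_sub_sq_norm_le hx hy.le
  calc (1 - ‖x‖ ^ 2 - (1 - ‖y‖ ^ 2)) ^ 2 = |‖x‖ ^ 2 - ‖y‖ ^ 2| ^ 2 := by rw [sq_abs]; ring
    _ ≤ (2 * ‖x - y‖) ^ 2 := pow_le_pow_left₀ (abs_nonneg _) hdiff 2
    _ ≤ 4 * t * (1 - ‖x‖ ^ 2) * (1 - ‖y‖ ^ 2) := by nlinarith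

lemma norm_sub_lt_of_sq_norm_sub_lt (hx : ‖x‖ ≤ 1) (hy : ‖y‖ < 1) (ht : 0 ≤ t)
    (h : ‖x - y‖ ^ 2 < t * ((1 - ‖x‖ ^ 2) * (1 - ‖y‖ ^ 2))) :
    ‖x - y‖ < √(t * (2 + 4 * t)) * (1 - ‖x‖ ^ 2) := by
  have ha : 0 ≤ 1 - ‖x‖ ^ 2 := by nlinarith [norm_nonneg x]
  have hb := one_sub_sq_norm_le_of_sq_norm_sub_le hx hy h.le
  refine lt_of_pow_lt_pow_left₀ 2 (by positivity) ?_
  calc ‖x - y‖ ^ 2 < t * ((1 - ‖x‖ ^ 2) * (1 - ‖y‖ ^ 2)) := h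
    _ ≤ t * ((1 - ‖x‖ ^ 2) * ((2 + 4 * t) * (1 - ‖x‖ ^ 2))) := by gcongr
    _ = (√(t * (2 + 4 * t)) * (1 - ‖x‖ ^ 2)) ^ 2 := by
      rw [mul_pow, Real.sq_sqrt (by positivity)]; ring

lemma sq_norm_sub_lt_of_norm_sub_lt (hx : ‖x‖ < 1) (ht : 0 ≤ t)
    (h : ‖x - y‖ < min (1 / 4) (√t / 2) * (1 - ‖x‖ ^ 2)) :
    ‖y‖ < 1 ∧ ‖x - y‖ ^ 2 < t * ((1 - ‖x‖ ^ 2) * (1 - ‖y‖ ^ 2)) := by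
  have ha : 0 < 1 - ‖x‖ ^ 2 := by nlinarith [norm_nonneg x]
  have hquarter : ‖x - y‖ < (1 - ‖x‖ ^ 2) / 4 := by
    nlinarith [min_le_left (1 / 4 : ℝ) (√t / 2)]
  have hy : ‖y‖ < 1 := by
    nlinarith [norm_sub_norm_le y x, norm_sub_rev x y, norm_nonneg x]
  have hdiff := abs_sq_norm_sub_sq_norm_le hx.le hy.le
  have hb : 1 - ‖x‖ ^ 2 < 2 * (1 - ‖y‖ ^ 2) := by linarith [neg_abs_le (‖x‖ ^ 2 - ‖y‖ ^ 2)]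
  refine ⟨hy, ?_⟩
  have hc : min (1 / 4) (√t / 2) ^ 2 ≤ t / 4 := by
    calc min (1 / 4) (√t / 2) ^ 2 ≤ (√t / 2) ^ 2 :=
          pow_le_pow_left₀ (by positivity) (min_le_right _ _) 2
      _ = t / 4 := by rw [div_pow, Real.sq_sqrt ht]; norm_num
  calc ‖x - y‖ ^ 2 < (min (1 / 4) (√t / 2) * (1 - ‖x‖ ^ 2)) ^ 2 :=
        pow_lt_pow_left₀ h (norm_nonneg _) two_ne_zero
    _ ≤ t / 4 * (1 - ‖x‖ ^ 2) ^ 2 := by rw [mul_pow]; gcongr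
    _ ≤ t * ((1 - ‖x‖ ^ 2) * (1 - ‖y‖ ^ 2)) := by nlinarith [mul_nonneg ht ha.le]

end NormedGroup

section Pseudohyperbolic

variable {n : ℕ} {x y : E n} {δ : ℝ}

lemma mem_Bset : x ∈ Bset n ↔ ‖x‖ < 1 := mem_ball_zero_iff

lemma br_eq_sqrt (x y : E n) :
    br x y = √((1 - ‖x‖ ^ 2) * (1 - ‖y‖ ^ 2) + ‖x - y‖ ^ 2) := by
  rw [br, norm_sub_sq_real]
  congr 1
  ring

lemma pd_lt_iff (hx : ‖x‖ < 1) (hy : ‖y‖ < 1) (hδ0 : 0 ≤ δ) (hδ1 : δ < 1) :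
    pd x y < δ ↔ ‖x - y‖ ^ 2 < δ ^ 2 / (1 - δ ^ 2) * ((1 - ‖x‖ ^ 2) * (1 - ‖y‖ ^ 2)) := by
  have hab : 0 < (1 - ‖x‖ ^ 2) * (1 - ‖y‖ ^ 2) :=
    mul_pos (by nlinarith [norm_nonneg x]) (by nlinarith [norm_nonneg y])
  have hbr := add_pos_of_pos_of_nonneg hab (sq_nonneg ‖x - y‖)
  rw [pd, br_eq_sqrt, div_lt_iff₀ (Real.sqrt_pos.mpr hbr),
    ← pow_lt_pow_iff_left₀ (norm_nonneg _) (by positivity) two_ne_zero, mul_pow,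
    Real.sq_sqrt hbr.le, div_mul_eq_mul_div, lt_div_iff₀ (by nlinarith)]
  constructor <;> intro h <;> linarith

lemma mem_Eball_iff (hx : x ∈ Bset n) (hδ0 : 0 ≤ δ) (hδ1 : δ < 1) :
    y ∈ Eball δ x ↔
      ‖y‖ < 1 ∧ ‖x - y‖ ^ 2 < δ ^ 2 / (1 - δ ^ 2) * ((1 - ‖x‖ ^ 2) * (1 - ‖y‖ ^ 2)) := by
  change y ∈ Bset n ∧ pd x y < δ ↔ _
  rw [mem_Bset]
  exact and_congr_right fun hy ↦ pd_lt_iff (mem_Bset.mp hx) hy hδ0 hδ1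

lemma measurableSet_Eball : MeasurableSet (Eball δ x) :=
  measurableSet_ball.inter
    (measurableSet_lt (f := pd x) (by unfold pd br; fun_prop) measurable_const)

lemma one_sub_sq_norm_le_of_mem_Eball (hx : x ∈ Bset n) (hδ0 : 0 ≤ δ) (hδ1 : δ < 1)
    (hy : y ∈ Eball δ x) :
    1 - ‖y‖ ^ 2 ≤ (2 + 4 * (δ ^ 2 / (1 - δ ^ 2))) * (1 - ‖x‖ ^ 2) ∧
      1 - ‖x‖ ^ 2 ≤ (2 + 4 * (δ ^ 2 / (1 - δ ^ 2))) * (1 - ‖y‖ ^ 2) := by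
  obtain ⟨hy1, hxy⟩ := (mem_Eball_iff hx hδ0 hδ1).mp hy
  have hx1 := mem_Bset.mp hx
  refine ⟨one_sub_sq_norm_le_of_sq_norm_sub_le hx1.le hy1 hxy.le,
    one_sub_sq_norm_le_of_sq_norm_sub_le hy1.le hx1 ?_⟩
  rw [norm_sub_rev, mul_comm (1 - ‖y‖ ^ 2)]
  exact hxy.le

lemma Eball_subset_ball (hx : x ∈ Bset n) (hδ0 : 0 ≤ δ) (hδ1 : δ < 1) :
    Eball δ x ⊆
      ball x (√(δ ^ 2 / (1 - δ ^ 2) * (2 + 4 * (δ ^ 2 / (1 - δ ^ 2)))) * (1 - ‖x‖ ^ 2)) := by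
  intro y hy
  obtain ⟨hy1, hxy⟩ := (mem_Eball_iff hx hδ0 hδ1).mp hy
  rw [mem_ball, dist_comm, dist_eq_norm]
  exact norm_sub_lt_of_sq_norm_sub_lt (mem_Bset.mp hx).le hy1
    (div_nonneg (sq_nonneg δ) (by nlinarith)) hxy

lemma ball_subset_Eball (hx : x ∈ Bset n) (hδ0 : 0 ≤ δ) (hδ1 : δ < 1) :
    ball x (min (1 / 4) (√(δ ^ 2 / (1 - δ ^ 2)) / 2) * (1 - ‖x‖ ^ 2)) ⊆ Eball δ x := by
  intro y hy
  rw [mem_ball, dist_comm, dist_eq_norm] at hy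
  rw [mem_Eball_iff hx hδ0 hδ1]
  exact sq_norm_sub_lt_of_norm_sub_lt (mem_Bset.mp hx)
    (div_nonneg (sq_nonneg δ) (by nlinarith)) hy

end Pseudohyperbolic

section NormalizedVolume

variable {n : ℕ} {x : E n} {r : ℝ}

lemma nu_ball (x : E n) (hr : 0 < r) : nu n (ball x r) = ENNReal.ofReal (r ^ n) := by
  have h0 : volume (Bset n) ≠ 0 := (measure_ball_pos volume (0 : E n) one_pos).ne'
  have htop : volume (Bset n) ≠ ∞ := measure_ball_lt_top.ne
  rw [nu, Measure.smul_apply, smul_eq_mul, Measure.addHaar_ball_of_pos volume x hr,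
    finrank_euclideanSpace_fin, mul_left_comm, ← Bset, ENNReal.inv_mul_cancel h0 htop, mul_one]

lemma nu_real_ball (x : E n) (hr : 0 < r) : (nu n).real (ball x r) = r ^ n := by
  rw [measureReal_def, nu_ball x hr, ENNReal.toReal_ofReal (by positivity)]

lemma setIntegral_mem_Icc_of_ball_subset_of_subset_ball {S : Set (E n)} {f : E n → ℝ}
    {R m M : ℝ} (hS : MeasurableSet S) (hr : 0 < r) (hrS : ball x r ⊆ S) (hSR : S ⊆ ball x R)
    (hf : AEStronglyMeasurable f (nu n)) (hm : 0 ≤ m) (hfS : ∀ y ∈ S, m ≤ f y ∧ f y ≤ M) :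
    ∫ y in S, f y ∂nu n ∈ Icc (m * r ^ n) (M * R ^ n) := by
  have hxS : x ∈ S := hrS (mem_ball_self hr)
  have hR : 0 < R := by simpa using hSR hxS
  have hM : 0 ≤ M := hm.trans ((hfS x hxS).1.trans (hfS x hxS).2)
  have hfinR : nu n (ball x R) ≠ ∞ := by rw [nu_ball x hR]; exact ENNReal.ofReal_ne_top
  have hfin : nu n S ≠ ∞ := measure_ne_top_of_subset hSR hfinR
  have hνS : r ^ n ≤ (nu n).real S ∧ (nu n).real S ≤ R ^ n := by
    rw [← nu_real_ball x hr, ← nu_real_ball x hR]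
    exact ⟨measureReal_mono hrS hfin, measureReal_mono hSR hfinR⟩
  have hfi : IntegrableOn f S (nu n) := by
    refine Measure.integrableOn_of_bounded (M := M) hfin hf
      ((ae_restrict_iff' hS).mpr (ae_of_all _ fun y hy ↦ ?_))
    rw [Real.norm_eq_abs, abs_of_nonneg (hm.trans (hfS y hy).1)]
    exact (hfS y hy).2
  constructor
  · calc m * r ^ n ≤ m * (nu n).real S := by gcongr; exact hνS.1
      _ ≤ ∫ y in S, f y ∂nu n :=
        setIntegral_ge_of_const_le_real hS hfin (fun y hy ↦ (hfS y hy).1) hfi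
  · calc ∫ y in S, f y ∂nu n ≤ ∫ _ in S, M ∂nu n :=
          setIntegral_mono_on hfi (integrableOn_const hfin) hS (fun y hy ↦ (hfS y hy).2)
      _ = M * (nu n).real S := by rw [setIntegral_const, smul_eq_mul, mul_comm]
      _ ≤ M * R ^ n := by gcongr; exact hνS.2

end NormalizedVolume

theorem stmt4_general (n : ℕ) (α δ : ℝ) (hδ0 : 0 < δ) (hδ1 : δ < 1) :
    ∃ C : ℝ, 1 ≤ C ∧ ∀ x ∈ Bset n,
      C⁻¹ * (1 - ‖x‖ ^ 2) ^ (α + n) ≤ (∫ y in Eball δ x, (1 - ‖y‖ ^ 2) ^ α ∂(nu n)) ∧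
      (∫ y in Eball δ x, (1 - ‖y‖ ^ 2) ^ α ∂(nu n)) ≤ C * (1 - ‖x‖ ^ 2) ^ (α + n) := by
  set t := δ ^ 2 / (1 - δ ^ 2)
  set K := 2 + 4 * t
  set c := min (1 / 4) (√t / 2)
  set R := √(t * K)
  set M := K ^ |α|
  have ht : 0 < t := div_pos (by positivity) (by nlinarith)
  have hK : 1 ≤ K := by linarith
  have hc : 0 < c := lt_min (by norm_num) (by positivity)
  have hM : 1 ≤ M := Real.one_le_rpow hK (abs_nonneg α)
  have hcn : c ^ n ≤ 1 := pow_le_one₀ hc.le ((min_le_left _ _).trans (by norm_num))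
  refine ⟨max (M * R ^ n) (M / c ^ n),
    ((one_le_div (by positivity)).mpr (hcn.trans hM)).trans (le_max_right _ _), fun x hx ↦ ?_⟩
  set a := 1 - ‖x‖ ^ 2
  have ha : 0 < a := by nlinarith [norm_nonneg x, mem_Bset.mp hx]
  have hweight : ∀ y ∈ Eball δ x,
      M⁻¹ * a ^ α ≤ (1 - ‖y‖ ^ 2) ^ α ∧ (1 - ‖y‖ ^ 2) ^ α ≤ M * a ^ α := by
    intro y hy
    obtain ⟨hyx, hxy⟩ := one_sub_sq_norm_le_of_mem_Eball hx hδ0.le hδ1 hy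
    have hb : 0 < 1 - ‖y‖ ^ 2 := by nlinarith [norm_nonneg y, mem_Bset.mp hy.1]
    exact ⟨(inv_mul_le_iff₀ (by positivity)).mpr (rpow_le_rpow_abs_mul_rpow hb ha hK hxy hyx),
      rpow_le_rpow_abs_mul_rpow ha hb hK hyx hxy⟩
  obtain ⟨hlo, hhi⟩ := setIntegral_mem_Icc_of_ball_subset_of_subset_ball measurableSet_Eball
    (mul_pos hc ha) (ball_subset_Eball hx hδ0.le hδ1) (Eball_subset_ball hx hδ0.le hδ1)
    (by fun_prop : Measurable _).aestronglyMeasurable (by positivity) hweight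
  have hpow : a ^ (α + n) = a ^ α * a ^ n := by rw [Real.rpow_add ha, Real.rpow_natCast]
  constructor
  · calc _ ≤ (M / c ^ n)⁻¹ * a ^ (α + n) := by gcongr; exact le_max_right _ _
      _ = M⁻¹ * a ^ α * (c * a) ^ n := by rw [hpow, mul_pow]; field_simp
      _ ≤ _ := hlo
  · calc _ ≤ M * a ^ α * (R * a) ^ n := hhi
      _ = M * R ^ n * a ^ (α + n) := by rw [hpow, mul_pow]; ring
      _ ≤ _ := by gcongr; exact le_max_left _ _

/-- For `α ∈ ℝ` and `0 < δ < 1` there is `C ≥ 1` such that for all `x ∈ B`,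
`C⁻¹(1 − |x|²)^{α+n} ≤ ∫_{E_δ(x)} (1 − |y|²)^α dν(y) ≤ C(1 − |x|²)^{α+n}`. -/
theorem stmt4 (n : ℕ) (hn : 2 ≤ n) (α δ : ℝ) (hδ0 : 0 < δ) (hδ1 : δ < 1) :
    ∃ C : ℝ, 1 ≤ C ∧ ∀ x ∈ Bset n,
      C⁻¹ * (1 - ‖x‖ ^ 2) ^ (α + n) ≤ (∫ y in Eball δ x, (1 - ‖y‖ ^ 2) ^ α ∂(nu n)) ∧
      (∫ y in Eball δ x, (1 - ‖y‖ ^ 2) ^ α ∂(nu n)) ≤ C * (1 - ‖x‖ ^ 2) ^ (α + n) :=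
  stmt4_general n α δ hδ0 hδ1
end
end
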